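/- For any decreasing sequence of prices (p_t)_{t=1}^T with p_1 = 1, there exists a truthful buyer valuation v₀ ∈ [1/2, 1] such that the monotone pricing algorithm (which offers p_1, p_2, … until the first acceptance at time κ* = min{t : p_t ≤ v₀}, then offers p_{κ*} for the remaining rounds) incurs regret v₀·κ* + (T - κ*)(v₀ - p_{κ*}) ≥ (1/4)·sqrt(T - sqrt(T)). -/
import Mathlib


set_option maxHeartbeats 1600000 in
theorem monotone_algorithm_regret_lower_bound
    (T : ℕ) (hT : 1 ≤ T) (p : ℕ → ℝ) (hp1 : p 1 = 1)
    (hdec : ∀ t, p (t + 1) ≤ p t) :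
    ∃ v₀ ∈ Set.Icc (1/2 : ℝ) 1,
      ((∀ t, 1 ≤ t → t ≤ T → v₀ < p t) ∧
        v₀ * T ≥ (1/4) * Real.sqrt ((T : ℝ) - Real.sqrt T)) ∨
      (∃ κ : ℕ, (1 ≤ κ ∧ κ ≤ T ∧ p κ ≤ v₀ ∧ ∀ t, 1 ≤ t → t < κ → v₀ < p t) ∧
        v₀ * κ + ((T : ℝ) - κ) * (v₀ - p κ)
          ≥ (1/4) * Real.sqrt ((T : ℝ) - Real.sqrt T)) := by
  classical
  have hmono : Antitone p := antitone_nat_of_succ_le hdec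
  have hT1 : (1:ℝ) ≤ T := by exact_mod_cast hT
  have hsT0 : 0 ≤ Real.sqrt T := Real.sqrt_nonneg _
  have hsTT : Real.sqrt T ≤ T := by
    nlinarith [sq_nonneg (Real.sqrt T - 1), Real.sq_sqrt (le_trans zero_le_one hT1)]
  set X : ℝ := (T:ℝ) - Real.sqrt T with hXdef
  have hX0 : 0 ≤ X := by simp only [hXdef]; linarith
  have hXT : X ≤ (T:ℝ) := by simp only [hXdef]; linarith
  have hr0 : 0 ≤ Real.sqrt X := Real.sqrt_nonneg _
  have hr2 : Real.sqrt X ^ 2 = X := Real.sq_sqrt hX0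
  have hrT : Real.sqrt X ≤ (T:ℝ) := le_trans (Real.sqrt_le_sqrt hXT) hsTT
  by_cases hall : ∀ t, 1 ≤ t → t ≤ T → (1/2 : ℝ) < p t
  · -- never accepted
    refine ⟨1/2, ⟨le_refl _, by norm_num⟩, Or.inl ⟨hall, ?_⟩⟩
    linarith
  · push_neg at hall
    obtain ⟨t₀, ht₀1, ht₀T, ht₀p⟩ := hall
    have hex : ∃ t, 1 ≤ t ∧ t ≤ T ∧ p t ≤ 1/2 := ⟨t₀, ht₀1, ht₀T, ht₀p⟩
    obtain ⟨κ, ⟨hκ1, hκT, hκp⟩, hκmin⟩ :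
        ∃ κ, (1 ≤ κ ∧ κ ≤ T ∧ p κ ≤ 1/2) ∧
          ∀ t, t < κ → ¬(1 ≤ t ∧ t ≤ T ∧ p t ≤ 1/2) :=
      ⟨Nat.find hex, Nat.find_spec hex, fun t ht => Nat.find_min hex ht⟩
    have hmin : ∀ t, 1 ≤ t → t < κ → (1/2 : ℝ) < p t := by
      intro t h1 hlt
      by_contra hc
      push_neg at hc
      exact hκmin t hlt ⟨h1, le_trans (le_of_lt hlt) hκT, hc⟩
    have hκ2 : 2 ≤ κ := by
      by_contra hc
      push_neg at hc
      have hκeq : κ = 1 := by omega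
      rw [hκeq, hp1] at hκp
      norm_num at hκp
    have hκTR : (κ:ℝ) ≤ T := by exact_mod_cast hκT
    have hκ2R : (2:ℝ) ≤ κ := by exact_mod_cast hκ2
    by_cases hbig : Real.sqrt X / 2 ≤ (κ:ℝ)
    · -- κ is large: valuation 1/2 waits long
      refine ⟨1/2, ⟨le_refl _, by norm_num⟩, Or.inr ⟨κ, ⟨hκ1, hκT, hκp, hmin⟩, ?_⟩⟩
      have h2 : ((T:ℝ) - κ) * (1/2 - p κ) ≥ 0 :=
        mul_nonneg (by linarith) (by linarith)
      linarith
    · push_neg at hbig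
      -- κ is small: there is a big drop among the first κ-1 steps
      set n := κ - 1 with hndef
      have hn1 : 1 ≤ n := by omega
      have hκn : κ = n + 1 := by omega
      have hnR : (1:ℝ) ≤ (n:ℝ) := by exact_mod_cast hn1
      have hnκR : (n:ℝ) = (κ:ℝ) - 1 := by
        rw [hκn]; push_cast; ring
      have htel : ∑ i ∈ Finset.range n, (p (i+1) - p (i+2)) = p 1 - p κ := by
        have h := Finset.sum_range_sub' (fun i => p (i+1)) n
        simpa [hκn] using h
      set c : ℝ := (p 1 - p κ) / n with hcdef
      have hn0 : (n:ℝ) ≠ 0 := Nat.cast_ne_zero.mpr (by omega)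
      have hsumc : ∑ _i ∈ Finset.range n, c = p 1 - p κ := by
        rw [Finset.sum_const, Finset.card_range, nsmul_eq_mul, hcdef]
        field_simp
      obtain ⟨j', hj'mem, hj'⟩ := Finset.exists_le_of_sum_le
        (Finset.nonempty_range_iff.mpr (by omega))
        (le_of_eq (hsumc.trans htel.symm))
      have hj'n : j' < n := Finset.mem_range.mp hj'mem
      obtain ⟨j, hjdef⟩ : ∃ j, j = j' + 1 := ⟨j' + 1, rfl⟩
      have hj1 : 1 ≤ j := by omega
      have hjκ : j + 1 ≤ κ := by omega
      have hj'eq : j' + 2 = j + 1 := by omega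
      have hdj : c ≤ p j - p (j + 1) := by
        rw [hjdef]; exact hj'
      -- lower bound on the drop
      have hpκhalf : (1:ℝ)/2 ≤ p 1 - p κ := by rw [hp1]; linarith
      have hcn : c * n = p 1 - p κ := by
        rw [hcdef]; field_simp
      have hdn : (1:ℝ)/2 ≤ (p j - p (j+1)) * n := by
        have h1 := mul_le_mul_of_nonneg_right hdj (by linarith : (0:ℝ) ≤ (n:ℝ))
        linarith [h1, hcn, hpκhalf]
      have hd0 : 0 < p j - p (j + 1) := by
        by_contra h
        push_neg at h
        have h1 := mul_le_mul_of_nonneg_right h (by linarith : (0:ℝ) ≤ (n:ℝ))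
        rw [zero_mul] at h1
        linarith [hdn]
      clear hdj hcn htel hsumc hj' hj'mem hex hκmin
      have hpj : (1:ℝ)/2 < p j := hmin j hj1 (by omega)
      have hpj1 : p j ≤ 1 := by rw [← hp1]; exact hmono hj1
      set M : ℝ := max (p (j+1)) (1/2) with hMdef
      set v₀ : ℝ := (p j + M) / 2 with hvdef
      have hMpj : M < p j := max_lt (by linarith) hpj
      have hMhalf : (1:ℝ)/2 ≤ M := le_max_right _ _
      have hMp : p (j+1) ≤ M := le_max_left _ _
      have hvhalf : (1:ℝ)/2 ≤ v₀ := by rw [hvdef]; linarith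
      have hv1 : v₀ ≤ 1 := by
        have hM1 : M ≤ 1 := max_le (by linarith) (by norm_num)
        rw [hvdef]; linarith
      have hvpj : v₀ < p j := by rw [hvdef]; linarith
      have hpv : p (j+1) ≤ v₀ := by rw [hvdef]; linarith
      have ha : (p j - p (j+1)) / 2 ≤ v₀ - p (j+1) := by rw [hvdef]; linarith
      refine ⟨v₀, ⟨hvhalf, hv1⟩, Or.inr ⟨j + 1, ⟨by omega, by omega, hpv, ?_⟩, ?_⟩⟩
      · intro t h1t htj
        have : p j ≤ p t := hmono (by omega)
        linarith
      · -- regret bound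
        have hjκR : ((j:ℝ) + 1) ≤ (κ:ℝ) := by exact_mod_cast hjκ
        set a : ℝ := v₀ - p (j + 1) with hadef
        have ha0 : 0 < a := by rw [hadef]; linarith
        have hna : (1:ℝ)/4 ≤ (n:ℝ) * a := by
          have h1 := mul_le_mul_of_nonneg_right ha (by linarith : (0:ℝ) ≤ (n:ℝ))
          have h2 : (v₀ - p (j+1)) * (n:ℝ) = (n:ℝ) * a := by rw [hadef]; ring
          rw [h2] at h1
          linarith [hdn, h1]
        have hκr : (κ:ℝ) * Real.sqrt X ≤ X / 2 := by
          have h1 := mul_le_mul_of_nonneg_right (le_of_lt hbig) hr0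
          have h2 : Real.sqrt X * Real.sqrt X = X := Real.mul_self_sqrt hX0
          linarith [h1, h2]
        have hTκr : (n:ℝ) * Real.sqrt X ≤ (T:ℝ) - κ := by
          rw [hnκR]
          have hring : ((κ:ℝ) - 1) * Real.sqrt X
              = (κ:ℝ) * Real.sqrt X - Real.sqrt X := by ring
          rw [hring]
          linarith [hκr, hXT, hbig, hr0, hT1]
        have hmain : Real.sqrt X / 4 ≤ ((T:ℝ) - κ) * a := by
          calc Real.sqrt X / 4 = Real.sqrt X * (1/4) := by ring
            _ ≤ Real.sqrt X * ((n:ℝ) * a) :=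
                mul_le_mul_of_nonneg_left hna hr0
            _ = ((n:ℝ) * Real.sqrt X) * a := by ring
            _ ≤ ((T:ℝ) - κ) * a := mul_le_mul_of_nonneg_right hTκr (le_of_lt ha0)
        have hfinal : ((T:ℝ) - κ) * a ≤ v₀ * ((j:ℝ)+1) + ((T:ℝ) - ((j:ℝ)+1)) * a := by
          have h2 : 0 ≤ ((κ:ℝ) - ((j:ℝ)+1)) * a := mul_nonneg (by linarith) ha0.le
          have h3 : 0 ≤ v₀ * ((j:ℝ)+1) := mul_nonneg (by linarith) (by positivity)
          linarith [h2, h3]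
        have hc : ((j + 1 : ℕ) : ℝ) = (j:ℝ) + 1 := by push_cast; ring
        rw [ge_iff_le, hc]
        have hq : (1:ℝ)/4 * Real.sqrt X = Real.sqrt X / 4 := by ring
        rw [hq]
        exact le_trans hmain hfinal
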